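/- arXiv:1112.1730 — 3 statements merged into one kernel-verified Lean document; each statement's English description precedes it below -/
import Mathlib

section
/- A finite satisfaction-form game has a satisfaction equilibrium in mixed strategies if and only if it has a satisfaction equilibrium in pure strategies. In particular, if π* is a mixed SE, then every action profile a in the support of the product measure π*_1 ⊗ ... ⊗ π*_K satisfies a_k ∈ f_k(a_{-k}) for all k, and hence is a pure SE. -/
open scoped Classical

/-- The sub-profile of `a` obtained by dropping player `k`'s coordinate. -/
def coDel {K : Type*} {A : K → Type*} (a : ∀ k, A k) (k : K) :
    ∀ j : {j : K // j ≠ k}, A j.1 := fun j => a j.1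

/-!
A mixed SE puts mass one on the event `{a | a k ∈ f k (coDel a k)}` for every player `k`, so its
complement carries mass zero. Since the weights `∏ j, π j (a j)` of the product measure are
nonnegative, every profile of positive weight lies in each of these events, i.e. is a pure SE;
such profiles exist because each `π k` has a point of positive mass. Conversely a pure SE `a` is
the mixed SE given by the Dirac masses at the `a k`.
-/

theorem Fintype.sum_prod_eq_one {ι R : Type*} [Fintype ι] [DecidableEq ι] [CommSemiring R]
    {κ : ι → Type*} [∀ i, Fintype (κ i)] {π : ∀ i, κ i → R} (hπ : ∀ i, ∑ x, π i x = 1) :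
    ∑ a : ∀ i, κ i, ∏ i, π i (a i) = 1 := by
  simp [← Fintype.prod_sum, hπ]

theorem Fintype.prod_ite_eq_pi {ι R : Type*} [Fintype ι] [CommSemiring R]
    {κ : ι → Type*} [∀ i, DecidableEq (κ i)] (a b : ∀ i, κ i) :
    ∏ i, (if b i = a i then 1 else 0 : R) = if b = a then 1 else 0 := by
  simp only [Fintype.prod_boole, funext_iff]

theorem of_sum_mul_ite_eq_one {α R : Type*} [Fintype α] [Ring R] [PartialOrder R]
    [IsOrderedRing R] {w : α → R} (hw : ∀ a, 0 ≤ w a) (hsum : ∑ a, w a = 1)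
    {p : α → Prop} [DecidablePred p] (h : ∑ a, w a * (if p a then 1 else 0) = 1)
    {a : α} (ha : 0 < w a) : p a := by
  have hcompl : ∑ b, w b * (1 - if p b then 1 else 0) = 0 := by
    simp only [mul_sub, mul_one, Finset.sum_sub_distrib, hsum, h, sub_self]
  have hterm : ∀ b, 0 ≤ w b * (1 - if p b then 1 else 0) := fun b =>
    mul_nonneg (hw b) (by split_ifs <;> simp)
  have hzero := (Finset.sum_eq_zero_iff_of_nonneg fun b _ => hterm b).mp hcompl a
    (Finset.mem_univ a)
  by_contra hpa
  simp [hpa, ha.ne'] at hzero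

section SatisfactionForm

variable {K : Type*} [Fintype K] [DecidableEq K] {A : K → Type*} [∀ k, Fintype (A k)]
  (f : ∀ k : K, (∀ j : {j : K // j ≠ k}, A j.1) → Set (A k))

def IsPureSE (a : ∀ k, A k) : Prop :=
  ∀ k, a k ∈ f k (coDel a k)

def IsMixedSE (π : ∀ k, A k → ℝ) : Prop :=
  ∀ k, ∑ a : ∀ j, A j, (∏ j, π j (a j)) * (if a k ∈ f k (coDel a k) then (1 : ℝ) else 0) = 1

variable {f}

theorem IsMixedSE.isPureSE_of_prod_pos {π : ∀ k, A k → ℝ} (hse : IsMixedSE f π)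
    (hπ0 : ∀ k x, 0 ≤ π k x) (hπ1 : ∀ k, ∑ x, π k x = 1) {a : ∀ k, A k}
    (ha : 0 < ∏ j, π j (a j)) : IsPureSE f a := fun k =>
  of_sum_mul_ite_eq_one (fun b => Finset.prod_nonneg fun j _ => hπ0 j (b j))
    (Fintype.sum_prod_eq_one hπ1) (hse k) ha

theorem IsMixedSE.exists_isPureSE {π : ∀ k, A k → ℝ} (hse : IsMixedSE f π)
    (hπ0 : ∀ k x, 0 ≤ π k x) (hπ1 : ∀ k, ∑ x, π k x = 1) : ∃ a, IsPureSE f a := by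
  have hmass : ∀ k, ∃ x, 0 < π k x := fun k =>
    let ⟨x, _, hx⟩ :=
      Finset.exists_lt_of_sum_lt (by simp [hπ1 k] : ∑ _x : A k, (0 : ℝ) < ∑ x, π k x)
    ⟨x, hx⟩
  choose a ha using hmass
  exact ⟨a, hse.isPureSE_of_prod_pos hπ0 hπ1 (Finset.prod_pos fun j _ => ha j)⟩

theorem IsPureSE.isMixedSE_dirac {a : ∀ k, A k} (ha : IsPureSE f a) :
    IsMixedSE f fun k x => if x = a k then 1 else 0 := by
  intro k
  simp only [Fintype.prod_ite_eq_pi, ite_mul, one_mul, zero_mul, Finset.sum_ite_eq',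
    Finset.mem_univ, if_true, if_pos (ha k)]

end SatisfactionForm

theorem stmt_4_general {K : Type*} [Fintype K] [DecidableEq K] (A : K → Type*)
    [∀ k, Fintype (A k)]
    (f : ∀ k : K, (∀ j : {j : K // j ≠ k}, A j.1) → Set (A k)) :
    ((∃ π : ∀ k, A k → ℝ,
        (∀ k x, 0 ≤ π k x) ∧ (∀ k, ∑ x, π k x = 1) ∧
        (∀ k : K,
          (∑ a : ∀ j, A j,
            (∏ j, π j (a j)) *
              (if a k ∈ f k (coDel a k) then (1 : ℝ) else 0)) = 1)) ↔
      (∃ a : ∀ k, A k, ∀ k, a k ∈ f k (coDel a k))) ∧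
    (∀ π : ∀ k, A k → ℝ,
      (∀ k x, 0 ≤ π k x) → (∀ k, ∑ x, π k x = 1) →
      (∀ k : K,
        (∑ a : ∀ j, A j,
          (∏ j, π j (a j)) *
            (if a k ∈ f k (coDel a k) then (1 : ℝ) else 0)) = 1) →
      ∀ a : ∀ j, A j, 0 < ∏ j, π j (a j) → ∀ k, a k ∈ f k (coDel a k)) := by
  refine ⟨⟨fun ⟨π, hπ0, hπ1, hse⟩ => IsMixedSE.exists_isPureSE hse hπ0 hπ1, fun ⟨a, ha⟩ => ?_⟩,
    fun π hπ0 hπ1 hse a ha => IsMixedSE.isPureSE_of_prod_pos hse hπ0 hπ1 ha⟩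
  refine ⟨fun k x => if x = a k then 1 else 0, fun k x => ?_, fun k => ?_,
    IsPureSE.isMixedSE_dirac ha⟩
  · dsimp only
    split_ifs <;> norm_num
  · simp

/-- A finite satisfaction-form game has a mixed SE iff it has a pure SE; moreover, every
profile in the support of the product measure of a mixed SE is a pure SE. -/
theorem stmt_4 {K : Type*} [Fintype K] [DecidableEq K] [Nonempty K] (A : K → Type*)
    [∀ k, Fintype (A k)] [∀ k, Nonempty (A k)]
    (f : ∀ k : K, (∀ j : {j : K // j ≠ k}, A j.1) → Set (A k)) :
    ((∃ π : ∀ k, A k → ℝ,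
        (∀ k x, 0 ≤ π k x) ∧ (∀ k, ∑ x, π k x = 1) ∧
        (∀ k : K,
          (∑ a : ∀ j, A j,
            (∏ j, π j (a j)) *
              (if a k ∈ f k (coDel a k) then (1 : ℝ) else 0)) = 1)) ↔
      (∃ a : ∀ k, A k, ∀ k, a k ∈ f k (coDel a k))) ∧
    (∀ π : ∀ k, A k → ℝ,
      (∀ k x, 0 ≤ π k x) → (∀ k, ∑ x, π k x = 1) →
      (∀ k : K,
        (∑ a : ∀ j, A j,
          (∏ j, π j (a j)) *
            (if a k ∈ f k (coDel a k) then (1 : ℝ) else 0)) = 1) →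
      ∀ a : ∀ j, A j, 0 < ∏ j, π j (a j) → ∀ k, a k ∈ f k (coDel a k)) :=
  stmt_4_general A f
end

section
/- Let G = (K, {A_k}, {u_k}, {g_k}) be a finite exact constrained potential game with potential φ. If the graphs F_k = {(a_k, a_{-k}) ∈ A : a_k ∈ g_k(a_{-k})} of the constraint correspondences are nonempty and all equal (F_1 = ... = F_K = F), then G has at least one generalized Nash equilibrium in pure strategies; in particular, any maximizer of φ over F is a GNE. -/
/-!
A maximizer `a` of the potential over the common feasible set `F` is a GNE: a unilateral
deviation of player `k` to `b ∈ g_k(a_{-k})` lands in the graph of `g_k`, hence in `F`, so it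
cannot raise `φ`, and by exactness it cannot raise `u_k` either. Since the action space is
finite and `F` is nonempty, such a maximizer exists.
-/

section ConstrainedPotentialGame

variable {K : Type*} [DecidableEq K] {A : K → Type*}

theorem coDel_update (a : ∀ k, A k) (k : K) (b : A k) :
    coDel (Function.update a k b) k = coDel a k := by
  funext j
  simp [coDel, Function.update_of_ne j.2]

def IsFeasible (g : ∀ k : K, (∀ j : {j : K // j ≠ k}, A j.1) → Set (A k)) (a : ∀ k, A k) :
    Prop :=
  ∀ k, a k ∈ g k (coDel a k)

def IsGNE (u : K → (∀ j, A j) → ℝ) (g : ∀ k : K, (∀ j : {j : K // j ≠ k}, A j.1) → Set (A k))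
    (a : ∀ k, A k) : Prop :=
  ∀ k, a k ∈ g k (coDel a k) ∧ ∀ b ∈ g k (coDel a k), u k a ≥ u k (Function.update a k b)

variable {g : ∀ k : K, (∀ j : {j : K // j ≠ k}, A j.1) → Set (A k)}

theorem isFeasible_update (hgraphs_eq : ∀ (k j : K) (a : ∀ i, A i),
      a k ∈ g k (coDel a k) ↔ a j ∈ g j (coDel a j))
    {a : ∀ k, A k} {k : K} {b : A k} (hb : b ∈ g k (coDel a k)) :
    IsFeasible g (Function.update a k b) := by
  intro j
  refine (hgraphs_eq k j _).mp ?_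
  rwa [coDel_update, Function.update_self]

theorem isGNE_of_forall_potential_le {u : K → (∀ j, A j) → ℝ} {φ : (∀ k, A k) → ℝ}
    (hpot : ∀ a : ∀ k, A k, (∃ i : K, a i ∈ g i (coDel a i)) →
      ∀ (k : K), ∀ b ∈ g k (coDel a k),
        u k a - u k (Function.update a k b) = φ a - φ (Function.update a k b))
    (hgraphs_eq : ∀ (k j : K) (a : ∀ i, A i),
      a k ∈ g k (coDel a k) ↔ a j ∈ g j (coDel a j))
    {a : ∀ k, A k} (ha : IsFeasible g a) (hmax : ∀ b, IsFeasible g b → φ b ≤ φ a) :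
    IsGNE u g a := by
  refine fun k => ⟨ha k, fun b hb => ?_⟩
  have hφ := hmax _ (isFeasible_update hgraphs_eq hb)
  have hexact := hpot a ⟨k, ha k⟩ k b hb
  linarith

end ConstrainedPotentialGame

theorem stmt_13_general {K : Type*} [Fintype K] [DecidableEq K] (A : K → Type*)
    [∀ k, Fintype (A k)]
    (u : ∀ _ : K, (∀ j, A j) → ℝ)
    (g : ∀ k : K, (∀ j : {j : K // j ≠ k}, A j.1) → Set (A k))
    (φ : (∀ k, A k) → ℝ)
    (hpot : ∀ a : ∀ k, A k, (∃ i : K, a i ∈ g i (coDel a i)) →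
      ∀ (k : K), ∀ b ∈ g k (coDel a k),
        u k a - u k (Function.update a k b) = φ a - φ (Function.update a k b))
    (hgraphs_eq : ∀ (k j : K) (a : ∀ i, A i),
      a k ∈ g k (coDel a k) ↔ a j ∈ g j (coDel a j))
    (hgraphs_ne : ∃ a : ∀ i, A i, ∀ k : K, a k ∈ g k (coDel a k)) :
    (∃ a : ∀ k, A k, ∀ k : K, a k ∈ g k (coDel a k) ∧
        ∀ b ∈ g k (coDel a k), u k a ≥ u k (Function.update a k b)) ∧
    (∀ a : ∀ k, A k, (∀ k : K, a k ∈ g k (coDel a k)) →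
      (∀ b : ∀ k, A k, (∀ k : K, b k ∈ g k (coDel b k)) → φ b ≤ φ a) →
      ∀ k : K, a k ∈ g k (coDel a k) ∧
        ∀ b ∈ g k (coDel a k), u k a ≥ u k (Function.update a k b)) := by
  have maximizer_isGNE : ∀ a, IsFeasible g a → (∀ b, IsFeasible g b → φ b ≤ φ a) →
      IsGNE u g a :=
    fun _ ha hmax => isGNE_of_forall_potential_le hpot hgraphs_eq ha hmax
  refine ⟨?_, maximizer_isGNE⟩
  obtain ⟨a, ha, hmax⟩ :=
    Set.exists_max_image {a | IsFeasible g a} φ (Set.toFinite _) hgraphs_ne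
  exact ⟨a, maximizer_isGNE a ha hmax⟩

/-- A finite exact constrained potential game whose constraint graphs are nonempty and
all identical has a generalized Nash equilibrium; in particular any maximizer of the
potential over the common feasible set is a GNE. -/
theorem stmt_13 {K : Type*} [Fintype K] [DecidableEq K] [Nonempty K] (A : K → Type*)
    [∀ k, Fintype (A k)] [∀ k, Nonempty (A k)]
    (u : ∀ _ : K, (∀ j, A j) → ℝ)
    (g : ∀ k : K, (∀ j : {j : K // j ≠ k}, A j.1) → Set (A k))
    (φ : (∀ k, A k) → ℝ)
    (hpot : ∀ a : ∀ k, A k, (∃ i : K, a i ∈ g i (coDel a i)) →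
      ∀ (k : K), ∀ b ∈ g k (coDel a k),
        u k a - u k (Function.update a k b) = φ a - φ (Function.update a k b))
    (hgraphs_eq : ∀ (k j : K) (a : ∀ i, A i),
      a k ∈ g k (coDel a k) ↔ a j ∈ g j (coDel a j))
    (hgraphs_ne : ∃ a : ∀ i, A i, ∀ k : K, a k ∈ g k (coDel a k)) :
    (∃ a : ∀ k, A k, ∀ k : K, a k ∈ g k (coDel a k) ∧
        ∀ b ∈ g k (coDel a k), u k a ≥ u k (Function.update a k b)) ∧
    (∀ a : ∀ k, A k, (∀ k : K, a k ∈ g k (coDel a k)) →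
      (∀ b : ∀ k, A k, (∀ k : K, b k ∈ g k (coDel b k)) → φ b ≤ φ a) →
      ∀ k : K, a k ∈ g k (coDel a k) ∧
        ∀ b ∈ g k (coDel a k), u k a ≥ u k (Function.update a k b)) :=
  stmt_13_general A u g φ hpot hgraphs_eq hgraphs_ne
end

section
/- Let (K, {A_k}, {f_k}) be a finite satisfaction-form game. Suppose player k has a clipping action a*_k (i.e., a*_k ∈ f_k(a_{-k}) for all a_{-k}) and there is a player j ≠ k such that f_j(a_k = a*_k, a_{-{j,k}}) = ∅ for every a_{-{j,k}}. Then under the satisfaction-driven dynamics with full-support exploration, once player k plays a*_k at any time before the process has reached an SE, the process never reaches a satisfaction equilibrium; moreover this event has strictly positive probability, so the dynamics fails to converge to an SE with strictly positive probability. -/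
/-!
Once player `k` plays its clipping action it is satisfied whatever the others do, so it keeps
that action forever: the profiles with `a k = astark` form a closed class of the chain, and none
of them is a satisfaction equilibrium because player `j` can never be satisfied there. From a
profile where `k` is unsatisfied, `k` resamples and picks `astark` with probability
`π k astark ≥ δ`, and from then on no equilibrium is reachable.
-/

open scoped Classical

/-- `n`-step transition probabilities of the Markov chain with kernel `P`. -/
noncomputable def nstep {S : Type*} [Fintype S] (P : S → S → ℝ) : ℕ → S → S → ℝ
  | 0, a, b => if b = a then 1 else 0
  | n + 1, a, b => ∑ c, nstep P n a c * P c b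

open Finset Matrix

section MarkovChain

variable {S : Type*} [Fintype S] [DecidableEq S] {P : S → S → ℝ}

theorem nstep_eq_pow (P : S → S → ℝ) (n : ℕ) (a b : S) :
    nstep P n a b = (Matrix.of P ^ n) a b := by
  induction n generalizing b with
  | zero => simp [nstep, Matrix.one_apply, eq_comm]
  | succ n ih => simp [nstep, pow_succ, Matrix.mul_apply, ih]

theorem nstep_succ' (n : ℕ) (a b : S) : nstep P (n + 1) a b = ∑ c, P a c * nstep P n c b := by
  simp [nstep_eq_pow, pow_succ', Matrix.mul_apply]

theorem of_nstep_mem_rowStochastic (hP : Matrix.of P ∈ rowStochastic ℝ S) (n : ℕ) :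
    Matrix.of (nstep P n) ∈ rowStochastic ℝ S := by
  convert pow_mem hP n using 1
  ext a b
  exact nstep_eq_pow P n a b

theorem nstep_eq_zero_of_closed {C : Finset S} (hC : ∀ a ∈ C, ∀ b ∉ C, P a b = 0) (n : ℕ)
    {a b : S} (ha : a ∈ C) (hb : b ∉ C) : nstep P n a b = 0 := by
  induction n generalizing b with
  | zero => exact if_neg fun hba : b = a => hb (hba ▸ ha)
  | succ n ih =>
    refine sum_eq_zero fun c _ => ?_
    by_cases hc : c ∈ C
    · rw [hC c hc b hb, mul_zero]
    · rw [ih hc, zero_mul]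

theorem sum_nstep_eq_zero_of_closed {C T : Finset S} (hC : ∀ a ∈ C, ∀ b ∉ C, P a b = 0)
    (hCT : Disjoint C T) (n : ℕ) {a : S} (ha : a ∈ C) : ∑ b ∈ T, nstep P n a b = 0 :=
  sum_eq_zero fun _ hb => nstep_eq_zero_of_closed hC n ha (disjoint_right.1 hCT hb)

theorem sum_nstep_succ_le_one_sub (hP : Matrix.of P ∈ rowStochastic ℝ S) {C T : Finset S}
    (hC : ∀ a ∈ C, ∀ b ∉ C, P a b = 0) (hCT : Disjoint C T) (n : ℕ) (a : S) :
    ∑ b ∈ T, nstep P (n + 1) a b ≤ 1 - ∑ c ∈ C, P a c := by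
  have hPn := of_nstep_mem_rowStochastic hP n
  have hhit_le_one : ∀ c, ∑ b ∈ T, nstep P n c b ≤ 1 := fun c =>
    (sum_le_univ_sum_of_nonneg fun b => nonneg_of_mem_rowStochastic hPn).trans_eq
      (sum_row_of_mem_rowStochastic hPn c)
  calc ∑ b ∈ T, nstep P (n + 1) a b
      = ∑ c, P a c * ∑ b ∈ T, nstep P n c b := by
        simp only [nstep_succ', mul_sum]
        exact sum_comm
    _ = ∑ c ∈ Cᶜ, P a c * ∑ b ∈ T, nstep P n c b := by
        rw [← sum_add_sum_compl C, sum_eq_zero fun c hc => by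
          rw [sum_nstep_eq_zero_of_closed hC hCT n hc, mul_zero], zero_add]
    _ ≤ ∑ c ∈ Cᶜ, P a c :=
        sum_le_sum fun c _ =>
          mul_le_of_le_one_right (nonneg_of_mem_rowStochastic hP) (hhit_le_one c)
    _ = 1 - ∑ c ∈ C, P a c := by
        rw [← sum_row_of_mem_rowStochastic hP a, ← sum_add_sum_compl C]
        simp

end MarkovChain

theorem sum_filter_apply_eq_prod {ι R : Type*} [Fintype ι] [DecidableEq ι] [CommSemiring R]
    {κ : ι → Type*} [∀ i, Fintype (κ i)] [∀ i, DecidableEq (κ i)]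
    (g : ∀ i, κ i → R) (k : ι) (x : κ k) :
    ∑ c : ∀ i, κ i with c k = x, ∏ i, g i (c i) =
      g k x * ∏ i ∈ univ.erase k, ∑ y, g i y := by
  -- cutting the `k`-th factor down to `x` turns the filtered sum into an unfiltered one
  set g' : ∀ i, κ i → R := Function.update g k fun y => if y = x then g k y else 0
  have hg' : ∀ i ∈ univ.erase k, g' i = g i := fun i hi =>
    Function.update_of_ne (ne_of_mem_erase hi) _ _
  have hprod : ∀ c : ∀ i, κ i,
      ∏ i, g' i (c i) = if c k = x then ∏ i, g i (c i) else 0 := by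
    intro c
    rw [← mul_prod_erase _ _ (mem_univ k), ← mul_prod_erase _ (fun i => g i (c i)) (mem_univ k),
      prod_congr rfl fun i hi => congrFun (hg' i hi) (c i)]
    simp [g', ite_mul]
  calc ∑ c : ∀ i, κ i with c k = x, ∏ i, g i (c i)
      = ∑ c : ∀ i, κ i, ∏ i, g' i (c i) := by simp only [sum_filter, hprod]
    _ = ∏ i, ∑ y, g' i y := (Fintype.prod_sum g').symm
    _ = g k x * ∏ i ∈ univ.erase k, ∑ y, g i y := by
        rw [← mul_prod_erase _ _ (mem_univ k), prod_congr rfl fun i hi => by rw [hg' i hi]]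
        simp [g']

section SatisfactionDynamics

variable {K : Type*} {A : K → Type*} [∀ i, DecidableEq (A i)]
  {f : ∀ i : K, (∀ j : {j : K // j ≠ i}, A j.1) → Set (A i)} {π : ∀ i : K, A i → ℝ}

variable (f π) in
noncomputable def satStep (a : ∀ i, A i) (i : K) (x : A i) : ℝ :=
  if a i ∈ f i (coDel a i) then (if x = a i then 1 else 0) else π i x

variable (f π) in
noncomputable def satKernel [Fintype K] (a b : ∀ i, A i) : ℝ :=
  ∏ i, satStep f π a i (b i)

theorem satStep_nonneg (hπ : ∀ i x, 0 ≤ π i x) (a : ∀ i, A i) (i : K) (x : A i) :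
    0 ≤ satStep f π a i x := by
  unfold satStep
  split_ifs
  exacts [zero_le_one, le_rfl, hπ i x]

theorem sum_satStep [∀ i, Fintype (A i)] (hπ : ∀ i, ∑ x, π i x = 1) (a : ∀ i, A i)
    (i : K) :
    ∑ x, satStep f π a i x = 1 := by
  unfold satStep
  split_ifs <;> simp [hπ]

theorem satKernel_mem_rowStochastic [Fintype K] [DecidableEq K] [∀ i, Fintype (A i)]
    (hπ₀ : ∀ i x, 0 ≤ π i x) (hπ₁ : ∀ i, ∑ x, π i x = 1) :
    Matrix.of (satKernel f π) ∈ rowStochastic ℝ (∀ i, A i) :=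
  mem_rowStochastic_iff_sum.2
    ⟨fun a b => prod_nonneg fun i _ => satStep_nonneg hπ₀ a i (b i), fun a => by
      simp only [of_apply, satKernel, ← Fintype.prod_sum, sum_satStep hπ₁, prod_const_one]⟩

theorem sum_filter_satKernel [Fintype K] [DecidableEq K] [∀ i, Fintype (A i)]
    (hπ : ∀ i, ∑ x, π i x = 1) (a : ∀ i, A i) (k : K) (x : A k) :
    ∑ c : ∀ i, A i with c k = x, satKernel f π a c = satStep f π a k x := by
  simp [satKernel, sum_filter_apply_eq_prod, sum_satStep hπ]

theorem satKernel_eq_zero_of_clipping [Fintype K] {k : K} {astark : A k}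
    (hclip : ∀ s, astark ∈ f k s) {a b : ∀ i, A i} (ha : a k = astark) (hb : b k ≠ astark) :
    satKernel f π a b = 0 :=
  prod_eq_zero (mem_univ k) (by simp [satStep, ha, hclip, hb])

end SatisfactionDynamics

theorem stmt_16_general {K : Type*} [Fintype K] [DecidableEq K] (A : K → Type*)
    [∀ k, Fintype (A k)] [∀ k, DecidableEq (A k)]
    (f : ∀ k : K, (∀ j : {j : K // j ≠ k}, A j.1) → Set (A k))
    (k : K) (astark : A k)
    (hclip : ∀ s : ∀ j : {j : K // j ≠ k}, A j.1, astark ∈ f k s)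
    (j : K)
    (hempty : ∀ a : ∀ i, A i, a k = astark → f j (coDel a j) = ∅)
    (δ : ℝ) (hδ : 0 < δ)
    (π : ∀ i : K, A i → ℝ)
    (hπδ : ∀ i x, δ ≤ π i x) (hπsum : ∀ i, ∑ x, π i x = 1)
    (P : (∀ i, A i) → (∀ i, A i) → ℝ)
    (hP : ∀ a b : ∀ i, A i,
      P a b = ∏ i, (if a i ∈ f i (coDel a i)
                      then (if b i = a i then (1 : ℝ) else 0)
                      else π i (b i))) :
    (∀ b : ∀ i, A i, b k = astark → ¬(∀ i, b i ∈ f i (coDel b i))) ∧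
    (∀ a : ∀ i, A i, a k = astark →
      ∀ n : ℕ, (∑ b : ∀ i, A i,
        (if (∀ i, b i ∈ f i (coDel b i)) then nstep P n a b else 0)) = 0) ∧
    (∀ a0 : ∀ i, A i, a0 k ∉ f k (coDel a0 k) →
      ∀ n : ℕ, 1 ≤ n →
        (∑ b : ∀ i, A i,
          (if (∀ i, b i ∈ f i (coDel b i)) then nstep P n a0 b else 0)) ≤ 1 - δ) := by
  obtain rfl : P = satKernel f π := funext₂ hP
  set C : Finset (∀ i, A i) := {c | c k = astark}
  have hC : ∀ a ∈ C, ∀ b ∉ C, satKernel f π a b = 0 := fun a ha b hb =>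
    satKernel_eq_zero_of_clipping hclip (mem_filter.1 ha).2 (by simpa [C] using hb)
  have hnot_SE : ∀ b : ∀ i, A i, b k = astark → ¬∀ i, b i ∈ f i (coDel b i) :=
    fun b hb hSE => by simpa [hempty b hb] using hSE j
  have hCT : Disjoint C ({b | ∀ i, b i ∈ f i (coDel b i)} : Finset _) :=
    disjoint_filter.2 fun b _ => hnot_SE b
  refine ⟨hnot_SE, fun a ha n => ?_, fun a0 ha0 n hn => ?_⟩
  · rw [← sum_filter]
    exact sum_nstep_eq_zero_of_closed hC hCT n (by simpa [C])
  · obtain ⟨m, rfl⟩ := Nat.exists_eq_add_of_le' hn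
    have hstoch := satKernel_mem_rowStochastic (f := f) (fun i x => hδ.le.trans (hπδ i x)) hπsum
    rw [← sum_filter]
    calc _ ≤ 1 - ∑ c ∈ C, satKernel f π a0 c := sum_nstep_succ_le_one_sub hstoch hC hCT m a0
      _ = 1 - π k astark := by rw [sum_filter_satKernel hπsum, satStep, if_neg ha0]
      _ ≤ 1 - δ := by linarith [hπδ k astark]

/-- If player `k` has a clipping action `a*_k` whose use makes some other player `j`'s
constraint set empty, then under the satisfaction-driven dynamics with exploration
probabilities bounded below by `δ`: once `k` plays `a*_k` the process never reaches an SE,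
and from any state where `k` is unsatisfied the probability of ever converging to an SE is
at most `1 - δ`; so convergence fails with strictly positive probability. -/
theorem stmt_16 {K : Type*} [Fintype K] [DecidableEq K] [Nonempty K] (A : K → Type*)
    [∀ k, Fintype (A k)] [∀ k, DecidableEq (A k)] [∀ k, Nonempty (A k)]
    (f : ∀ k : K, (∀ j : {j : K // j ≠ k}, A j.1) → Set (A k))
    (k : K) (astark : A k)
    (hclip : ∀ s : ∀ j : {j : K // j ≠ k}, A j.1, astark ∈ f k s)
    (j : K) (hjk : j ≠ k)
    (hempty : ∀ a : ∀ i, A i, a k = astark → f j (coDel a j) = ∅)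
    (δ : ℝ) (hδ : 0 < δ)
    (π : ∀ i : K, A i → ℝ)
    (hπδ : ∀ i x, δ ≤ π i x) (hπsum : ∀ i, ∑ x, π i x = 1)
    (P : (∀ i, A i) → (∀ i, A i) → ℝ)
    (hP : ∀ a b : ∀ i, A i,
      P a b = ∏ i, (if a i ∈ f i (coDel a i)
                      then (if b i = a i then (1 : ℝ) else 0)
                      else π i (b i))) :
    (∀ b : ∀ i, A i, b k = astark → ¬(∀ i, b i ∈ f i (coDel b i))) ∧
    (∀ a : ∀ i, A i, a k = astark →
      ∀ n : ℕ, (∑ b : ∀ i, A i,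
        (if (∀ i, b i ∈ f i (coDel b i)) then nstep P n a b else 0)) = 0) ∧
    (∀ a0 : ∀ i, A i, a0 k ∉ f k (coDel a0 k) →
      ∀ n : ℕ, 1 ≤ n →
        (∑ b : ∀ i, A i,
          (if (∀ i, b i ∈ f i (coDel b i)) then nstep P n a0 b else 0)) ≤ 1 - δ) :=
  stmt_16_general A f k astark hclip j hempty δ hδ π hπδ hπsum P hP
end
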